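/- Let ρ₁ ∈ ℝ, ρ₂, ρ₃, κ > 0, and define σ = (2ρ₁ρ₂ - 2κ√(ρ₂ρ₃))/(ρ₂ + κ), δ = (σ + √(σ² + 16ρ₂ρ₃))/(4ρ₂). Set b(s) = e^{-σ s} and a(s) = δ·b(s). If ρ₁ ≥ κ√(ρ₃/ρ₂), then on [0,∞): b'(s) + 2ρ₂ a(s) - 2ρ₃ b(s)²/a(s) = 0 and a'(s) + 2ρ₁ a(s) - 2κ a(s)²/b(s) ≥ 0. -/

import Mathlib

/-! With the exponential ansatz both conditions become algebra in `δ`: the equation says that `δ`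
is the positive root of `2ρ₂x² - σx - 2ρ₃`, and the inequality becomes `2κδ ≤ 2ρ₁ - σ`. The latter
holds because at `x = (ρ₁ + √(ρ₂ρ₃)) / (ρ₂ + κ)`, where `2κx = 2ρ₁ - σ`, the quadratic equals
`2(ρ₁√(ρ₂ρ₃) - κρ₃) / (ρ₂ + κ)`, which is nonnegative exactly under the hypothesis on `ρ₁`. -/

open Real

lemma quadratic_root_pos {p c σ δ : ℝ} (hp : 0 < p) (hc : 0 < c)
    (hδ : δ = (σ + √(σ ^ 2 + 4 * p * c)) / (2 * p)) : 0 < δ := by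
  have hσ : |σ| < √(σ ^ 2 + 4 * p * c) := by
    rw [← sqrt_sq_eq_abs]
    exact sqrt_lt_sqrt (sq_nonneg σ) (by linarith [mul_pos hp hc])
  rw [hδ]
  exact div_pos (by linarith [neg_abs_le σ]) (by positivity)

lemma quadratic_root_eq_zero {p c σ δ : ℝ} (hp : 0 < p) (hc : 0 < c)
    (hδ : δ = (σ + √(σ ^ 2 + 4 * p * c)) / (2 * p)) : p * δ ^ 2 - σ * δ - c = 0 := by
  set u := √(σ ^ 2 + 4 * p * c)
  have hsq : u ^ 2 = σ ^ 2 + 4 * p * c := sq_sqrt (by nlinarith [sq_nonneg σ, mul_pos hp hc])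
  rw [hδ]
  field_simp
  linear_combination hsq

lemma root_le_of_quadratic_nonneg {p c σ δ x : ℝ} (hp : 0 ≤ p) (hc : 0 < c) (hδ : 0 < δ)
    (hroot : p * δ ^ 2 - σ * δ - c = 0) (hx : 0 ≤ x) (hqx : 0 ≤ p * x ^ 2 - σ * x - c) :
    δ ≤ x := by
  have hslope : 0 < p * δ - σ := pos_of_mul_pos_right (by linarith : 0 < δ * (p * δ - σ)) hδ.le
  have hfactor : 0 ≤ (x - δ) * (p * x + (p * δ - σ)) := by linear_combination hqx + hroot
  have := nonneg_of_mul_nonneg_left hfactor (by positivity)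
  linarith

lemma mul_le_mul_sqrt_of_mul_sqrt_div_le {ρ₁ ρ₂ ρ₃ κ : ℝ} (hρ₂ : 0 < ρ₂) (hρ₃ : 0 ≤ ρ₃)
    (hρ₁ : κ * √(ρ₃ / ρ₂) ≤ ρ₁) : κ * ρ₃ ≤ ρ₁ * √(ρ₂ * ρ₃) := by
  have hsqrt : √(ρ₃ / ρ₂) * √(ρ₂ * ρ₃) = ρ₃ := by
    rw [← sqrt_mul (div_nonneg hρ₃ hρ₂.le), div_mul_eq_mul_div, mul_div_assoc,
      mul_div_cancel_left₀ _ hρ₂.ne', sqrt_mul_self hρ₃]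
  calc κ * ρ₃ = κ * √(ρ₃ / ρ₂) * √(ρ₂ * ρ₃) := by rw [mul_assoc, hsqrt]
    _ ≤ ρ₁ * √(ρ₂ * ρ₃) := by gcongr

lemma two_mul_mul_le_of_quadratic_root {ρ₁ ρ₂ ρ₃ κ σ δ : ℝ} (hρ₂ : 0 < ρ₂) (hρ₃ : 0 < ρ₃)
    (hκ : 0 < κ) (hρ₁ : κ * ρ₃ ≤ ρ₁ * √(ρ₂ * ρ₃))
    (hσ : σ = (2 * ρ₁ * ρ₂ - 2 * κ * √(ρ₂ * ρ₃)) / (ρ₂ + κ))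
    (hδ : 0 < δ) (hroot : 2 * ρ₂ * δ ^ 2 - σ * δ - 2 * ρ₃ = 0) :
    2 * κ * δ ≤ 2 * ρ₁ - σ := by
  set t := √(ρ₂ * ρ₃)
  have ht : 0 < t := sqrt_pos.2 (mul_pos hρ₂ hρ₃)
  have ht2 : t ^ 2 = ρ₂ * ρ₃ := sq_sqrt (mul_pos hρ₂ hρ₃).le
  have hρ₁pos : 0 < ρ₁ := pos_of_mul_pos_left ((mul_pos hκ hρ₃).trans_le hρ₁) ht.le
  have hσ' : σ * (ρ₂ + κ) = 2 * ρ₁ * ρ₂ - 2 * κ * t := by rw [hσ]; field_simp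
  set x := (ρ₁ + t) / (ρ₂ + κ)
  have hx : 0 ≤ x := by positivity
  have hκx : 2 * κ * x = 2 * ρ₁ - σ := by
    simp only [x]; field_simp; linear_combination hσ'
  have hqx : 2 * ρ₂ * x ^ 2 - σ * x - 2 * ρ₃ = 2 * (ρ₁ * t - κ * ρ₃) / (ρ₂ + κ) := by
    simp only [x]; field_simp; linear_combination (-(ρ₁ + t)) * hσ' + 2 * (ρ₂ + κ) * ht2
  have hδx : δ ≤ x :=
    root_le_of_quadratic_nonneg (by positivity) (by positivity) hδ hroot hx
      (by rw [hqx]; exact div_nonneg (by linarith) (by positivity))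
  calc 2 * κ * δ ≤ 2 * κ * x := by gcongr
    _ = 2 * ρ₁ - σ := hκx

/-- The explicit exponential functions `b(s) = e^{-σs}`, `a(s) = δ b(s)` solve
the required differential (in)equalities on `[0, ∞)`. -/
theorem stmt_7 (ρ₁ ρ₂ ρ₃ κ : ℝ) (hρ₂ : 0 < ρ₂) (hρ₃ : 0 < ρ₃) (hκ : 0 < κ)
    (hρ₁ : ρ₁ ≥ κ * Real.sqrt (ρ₃ / ρ₂))
    (σ δ : ℝ)
    (hσ : σ = (2 * ρ₁ * ρ₂ - 2 * κ * Real.sqrt (ρ₂ * ρ₃)) / (ρ₂ + κ))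
    (hδ : δ = (σ + Real.sqrt (σ ^ 2 + 16 * ρ₂ * ρ₃)) / (4 * ρ₂))
    (a b : ℝ → ℝ)
    (hb : b = fun s => Real.exp (-σ * s))
    (ha : a = fun s => δ * b s) :
    ∀ s : ℝ, 0 ≤ s →
      deriv b s + 2 * ρ₂ * a s - 2 * ρ₃ * (b s) ^ 2 / a s = 0 ∧
      deriv a s + 2 * ρ₁ * a s - 2 * κ * (a s) ^ 2 / b s ≥ 0 := by
  have hδ' : δ = (σ + √(σ ^ 2 + 4 * (2 * ρ₂) * (2 * ρ₃))) / (2 * (2 * ρ₂)) := by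
    rw [hδ]; ring_nf
  have hδpos : 0 < δ := quadratic_root_pos (by positivity) (by positivity) hδ'
  have hroot := quadratic_root_eq_zero (by positivity) (by positivity) hδ'
  have hκδ : 2 * κ * δ ≤ 2 * ρ₁ - σ :=
    two_mul_mul_le_of_quadratic_root hρ₂ hρ₃ hκ
      (mul_le_mul_sqrt_of_mul_sqrt_div_le hρ₂ hρ₃.le hρ₁) hσ hδpos hroot
  intro s _
  have hb' : HasDerivAt b (-σ * b s) s := by
    subst hb
    simpa [mul_comm] using ((hasDerivAt_id s).const_mul (-σ)).exp
  have hbs : 0 < b s := by rw [hb]; exact exp_pos _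
  subst ha
  simp only [deriv_const_mul δ hb'.differentiableAt, hb'.deriv]
  constructor
  · field_simp
    linear_combination b s * hroot
  · calc _ = δ * b s * (2 * ρ₁ - σ - 2 * κ * δ) := by field_simp; ring
      _ ≥ 0 := mul_nonneg (by positivity) (by linarith)
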